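/- Call γ, δ ∈ ℂ(x)* multiplicatively independent if γ^r δ^s ∈ ℂ for integers r, s implies r = s = 0. Let γ, δ ∈ ℂ(x) be nonconstant and multiplicatively independent, and let L ≥ 0 be given. Then there exists a constant C (depending only on γ, δ, L) such that for all natural numbers n, m with H(γ^n / δ^m) ≤ L, one has max(n, m) ≤ C. -/
import Mathlib

open Polynomial
open scoped Classical

/-- The places of ℂ(x): `some c` is the finite place at `c`, `none` is the place at infinity. -/
noncomputable def nu (v : Option ℂ) (f : RatFunc ℂ) : ℤ :=
  match v with
  | some c => (f.num.rootMultiplicity c : ℤ) - (f.denom.rootMultiplicity c : ℤ)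
  | none => (f.denom.natDegree : ℤ) - (f.num.natDegree : ℤ)

/-- The height of a rational function: `H f = -∑_ν min (0, ν f)`. -/
noncomputable def H (f : RatFunc ℂ) : ℤ := -∑ᶠ v : Option ℂ, min 0 (nu v f)

noncomputable def dd (v : Option ℂ) (p : Polynomial ℂ) : ℤ :=
  match v with
  | some c => (p.rootMultiplicity c : ℤ)
  | none => -(p.natDegree : ℤ)

lemma dd_mul {p q : Polynomial ℂ} (hp : p ≠ 0) (hq : q ≠ 0) (v : Option ℂ) :
    dd v (p * q) = dd v p + dd v q := by
  cases v with
  | some c => simp [dd, Polynomial.rootMultiplicity_mul (mul_ne_zero hp hq)]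
  | none => simp [dd, Polynomial.natDegree_mul hp hq]; ring

lemma nu_eq_dd (v : Option ℂ) (f : RatFunc ℂ) : nu v f = dd v f.num - dd v f.denom := by
  cases v <;> simp [nu, dd] <;> ring_nf

lemma nu_rep {f : RatFunc ℂ} (hf : f ≠ 0) {p q : Polynomial ℂ} (hq : q ≠ 0)
    (hrep : f = algebraMap _ _ p / algebraMap _ _ q) (v : Option ℂ) :
    nu v f = dd v p - dd v q := by
  have hp : p ≠ 0 := by
    rintro rfl; simp at hrep; exact hf hrep
  have hd : (algebraMap (Polynomial ℂ) (RatFunc ℂ)) f.denom ≠ 0 :=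
    RatFunc.algebraMap_ne_zero f.denom_ne_zero
  have hq' : (algebraMap (Polynomial ℂ) (RatFunc ℂ)) q ≠ 0 :=
    RatFunc.algebraMap_ne_zero hq
  have h2 : (algebraMap (Polynomial ℂ) (RatFunc ℂ)) p / algebraMap _ _ q
      = algebraMap (Polynomial ℂ) (RatFunc ℂ) f.num / algebraMap _ _ f.denom := by
    rw [RatFunc.num_div_denom]; exact hrep.symm
  have h3 := (div_eq_div_iff hq' hd).mp h2
  rw [← map_mul, ← map_mul] at h3
  have key : p * f.denom = f.num * q := RatFunc.algebraMap_injective ℂ h3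
  have := congrArg (dd v) key
  rw [dd_mul hp f.denom_ne_zero, dd_mul (RatFunc.num_ne_zero hf) hq] at this
  rw [nu_eq_dd]; omega

lemma nu_mul {f g : RatFunc ℂ} (hf : f ≠ 0) (hg : g ≠ 0) (v : Option ℂ) :
    nu v (f * g) = nu v f + nu v g := by
  have hrep : f * g = algebraMap _ _ (f.num * g.num) / algebraMap _ _ (f.denom * g.denom) := by
    rw [map_mul, map_mul, ← div_mul_div_comm, RatFunc.num_div_denom, RatFunc.num_div_denom]
  rw [nu_rep (mul_ne_zero hf hg) (mul_ne_zero f.denom_ne_zero g.denom_ne_zero) hrep v,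
    dd_mul (RatFunc.num_ne_zero hf) (RatFunc.num_ne_zero hg),
    dd_mul f.denom_ne_zero g.denom_ne_zero, nu_eq_dd, nu_eq_dd]
  ring

lemma nu_one (v : Option ℂ) : nu v (1 : RatFunc ℂ) = 0 := by
  cases v <;> simp [nu, RatFunc.num_one, RatFunc.denom_one]

lemma nu_inv {f : RatFunc ℂ} (hf : f ≠ 0) (v : Option ℂ) : nu v f⁻¹ = -nu v f := by
  have hrep : f⁻¹ = algebraMap _ _ f.denom / algebraMap _ _ f.num := by
    conv_lhs => rw [← RatFunc.num_div_denom f]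
    rw [inv_div]
  rw [nu_rep (inv_ne_zero hf) (RatFunc.num_ne_zero hf) hrep v, nu_eq_dd]
  ring

lemma nu_pow {f : RatFunc ℂ} (hf : f ≠ 0) (n : ℕ) (v : Option ℂ) :
    nu v (f ^ n) = n * nu v f := by
  induction n with
  | zero => simpa using nu_one v
  | succ n ih =>
      rw [pow_succ, nu_mul (pow_ne_zero n hf) hf, ih]
      push_cast; ring

lemma nu_zpow {f : RatFunc ℂ} (hf : f ≠ 0) (r : ℤ) (v : Option ℂ) :
    nu v (f ^ r) = r * nu v f := by
  cases r with
  | ofNat n => simpa using nu_pow hf n v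
  | negSucc n =>
      rw [zpow_negSucc, nu_inv (pow_ne_zero _ hf), nu_pow hf, Int.negSucc_eq]
      push_cast; ring

lemma no_common_root {f : RatFunc ℂ} {c : ℂ} (h1 : f.num.IsRoot c) (h2 : f.denom.IsRoot c) :
    False := by
  obtain ⟨a, b, hab⟩ := f.isCoprime_num_denom
  have := congrArg (Polynomial.eval c) hab
  simp [h1.eq_zero, h2.eq_zero] at this

lemma eq_C_of_nu_eq_zero {f : RatFunc ℂ} (hf : f ≠ 0) (h : ∀ v, nu v f = 0) :
    ∃ c : ℂ, f = RatFunc.C c := by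
  have hnum : f.num.natDegree = 0 := by
    by_contra hd
    obtain ⟨c, hc⟩ := IsAlgClosed.exists_root f.num (by
      simp [Polynomial.degree_eq_natDegree (RatFunc.num_ne_zero hf)]
      exact_mod_cast hd)
    have h1 : 0 < f.num.rootMultiplicity c :=
      (Polynomial.rootMultiplicity_pos (RatFunc.num_ne_zero hf)).mpr hc
    have h2 : f.denom.rootMultiplicity c = 0 :=
      Polynomial.rootMultiplicity_eq_zero_iff.mpr fun hr => (no_common_root hc hr).elim
    have h3 := h (some c)
    have h4 : nu (some c) f
        = (f.num.rootMultiplicity c : ℤ) - (f.denom.rootMultiplicity c : ℤ) := rfl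
    rw [h4, h2] at h3
    omega
  have hden : f.denom.natDegree = 0 := by
    by_contra hd
    obtain ⟨c, hc⟩ := IsAlgClosed.exists_root f.denom (by
      simp [Polynomial.degree_eq_natDegree f.denom_ne_zero]
      exact_mod_cast hd)
    have h1 : 0 < f.denom.rootMultiplicity c :=
      (Polynomial.rootMultiplicity_pos f.denom_ne_zero).mpr hc
    have h2 : f.num.rootMultiplicity c = 0 :=
      Polynomial.rootMultiplicity_eq_zero_iff.mpr fun hr => (no_common_root hr hc).elim
    have h3 := h (some c)
    have h4 : nu (some c) f
        = (f.num.rootMultiplicity c : ℤ) - (f.denom.rootMultiplicity c : ℤ) := rfl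
    rw [h4, h2] at h3
    omega
  obtain ⟨a, ha⟩ := Polynomial.natDegree_eq_zero.mp hnum
  obtain ⟨b, hb⟩ := Polynomial.natDegree_eq_zero.mp hden
  have hb0 : b ≠ 0 := by
    intro h0; exact f.denom_ne_zero (by rw [← hb, h0, map_zero])
  refine ⟨a / b, ?_⟩
  have := f.num_div_denom
  rw [← ha, ← hb] at this
  rw [← this, RatFunc.algebraMap_C, RatFunc.algebraMap_C, map_div₀]

/-- A finite set of places outside of which `nu · f` vanishes. -/
noncomputable def plS (f : RatFunc ℂ) : Finset (Option ℂ) :=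
  insert none ((f.num.roots.toFinset ∪ f.denom.roots.toFinset).image some)

lemma dd_eq_zero_of_not_root {p : Polynomial ℂ} (hp : p ≠ 0) {c : ℂ}
    (hc : c ∉ p.roots.toFinset) : dd (some c) p = 0 := by
  simp only [Multiset.mem_toFinset, Polynomial.mem_roots, hp, ne_eq, not_false_iff,
    true_and] at hc
  simp [dd, Polynomial.rootMultiplicity_eq_zero hc]

lemma nu_eq_zero_of_notMem {f : RatFunc ℂ} (hf : f ≠ 0) {v : Option ℂ}
    (hv : v ∉ plS f) : nu v f = 0 := by
  cases v with
  | none => exact absurd (Finset.mem_insert_self _ _) hv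
  | some c =>
      rw [nu_eq_dd]
      have hcn : c ∉ f.num.roots.toFinset := by
        intro h; exact hv (by
          simp only [plS, Finset.mem_insert, Finset.mem_image]
          exact Or.inr ⟨c, Finset.mem_union_left _ h, rfl⟩)
      have hcd : c ∉ f.denom.roots.toFinset := by
        intro h; exact hv (by
          simp only [plS, Finset.mem_insert, Finset.mem_image]
          exact Or.inr ⟨c, Finset.mem_union_right _ h, rfl⟩)
      rw [dd_eq_zero_of_not_root (RatFunc.num_ne_zero hf) hcn,
        dd_eq_zero_of_not_root f.denom_ne_zero hcd]
      ring

lemma H_eq_sum {f : RatFunc ℂ} (hf : f ≠ 0) :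
    H f = ∑ v ∈ plS f, -min 0 (nu v f) := by
  have hsub : Function.support (fun v => min 0 (nu v f)) ⊆ (plS f : Set (Option ℂ)) := by
    intro v hv
    by_contra hmem
    have h0 := nu_eq_zero_of_notMem hf hmem
    exact hv (by simp [h0])
  rw [H, finsum_eq_sum_of_support_subset _ hsub, ← Finset.sum_neg_distrib]

lemma sum_dd {p : Polynomial ℂ} (hp : p ≠ 0) {T : Finset (Option ℂ)}
    (hT : insert none (p.roots.toFinset.image some) ⊆ T) :
    ∑ v ∈ T, dd v p = 0 := by
  rw [← Finset.sum_subset hT (fun v _ hv => by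
    cases v with
    | none => exact absurd (Finset.mem_insert_self _ _) hv
    | some c =>
        apply dd_eq_zero_of_not_root hp
        intro h
        exact hv (Finset.mem_insert_of_mem (Finset.mem_image_of_mem _ h)))]
  rw [Finset.sum_insert (by simp), Finset.sum_image (by simp)]
  have hcard : p.roots.card = p.natDegree :=
    Polynomial.splits_iff_card_roots.mp (IsAlgClosed.splits p)
  have : ∑ c ∈ p.roots.toFinset, dd (some c) p
      = ((∑ c ∈ p.roots.toFinset, p.roots.count c : ℕ) : ℤ) := by
    push_cast
    refine Finset.sum_congr rfl fun c _ => ?_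
    simp [dd, Polynomial.count_roots]
  rw [this, Multiset.toFinset_sum_count_eq, hcard]
  simp [dd]

lemma sum_nu {f : RatFunc ℂ} (hf : f ≠ 0) : ∑ v ∈ plS f, nu v f = 0 := by
  have h1 : ∑ v ∈ plS f, nu v f = ∑ v ∈ plS f, dd v f.num - ∑ v ∈ plS f, dd v f.denom := by
    rw [← Finset.sum_sub_distrib]
    exact Finset.sum_congr rfl fun v _ => nu_eq_dd v f
  rw [h1, sum_dd (RatFunc.num_ne_zero hf), sum_dd f.denom_ne_zero, sub_zero]
  · intro v hv
    simp only [plS, Finset.mem_insert, Finset.mem_image, Multiset.mem_toFinset,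
      Finset.mem_union] at hv ⊢
    rcases hv with h | ⟨c, hc, rfl⟩
    · exact Or.inl h
    · exact Or.inr ⟨c, Or.inr hc, rfl⟩
  · intro v hv
    simp only [plS, Finset.mem_insert, Finset.mem_image, Multiset.mem_toFinset,
      Finset.mem_union] at hv ⊢
    rcases hv with h | ⟨c, hc, rfl⟩
    · exact Or.inl h
    · exact Or.inr ⟨c, Or.inl hc, rfl⟩

lemma abs_nu_le {f : RatFunc ℂ} (hf : f ≠ 0) (v : Option ℂ) : |nu v f| ≤ H f := by
  have hmax : ∑ w ∈ plS f, max 0 (nu w f) = H f := by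
    have : ∀ w : Option ℂ, max 0 (nu w f) = nu w f + -min 0 (nu w f) := fun w => by
      have := min_add_max (0 : ℤ) (nu w f); linarith
    rw [Finset.sum_congr rfl fun w _ => this w, Finset.sum_add_distrib, sum_nu hf, zero_add,
      H_eq_sum hf]
  have hH : H f = ∑ w ∈ plS f, -min 0 (nu w f) := H_eq_sum hf
  by_cases hv : v ∈ plS f
  · have h1 : -min 0 (nu v f) ≤ H f := by
      rw [hH]
      exact Finset.single_le_sum (fun w _ => neg_nonneg.mpr (min_le_left (0:ℤ) _)) hv
    have h2 : max 0 (nu v f) ≤ H f := by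
      rw [← hmax]
      exact Finset.single_le_sum (fun w _ => le_max_left (0:ℤ) _) hv
    exact abs_le.mpr ⟨by linarith [min_le_right 0 (nu v f)],
      le_trans (le_max_right 0 _) h2⟩
  · have h0 : nu v f = 0 := nu_eq_zero_of_notMem hf hv
    have hpos : 0 ≤ H f := by
      rw [hH]; exact Finset.sum_nonneg fun w _ => neg_nonneg.mpr (min_le_left 0 _)
    rw [h0]; simpa using hpos


lemma nu_ratio {γ δ : RatFunc ℂ} (hγ0 : γ ≠ 0) (hδ0 : δ ≠ 0) (n m : ℕ) (v : Option ℂ) :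
    nu v (γ ^ n / δ ^ m) = n * nu v γ - m * nu v δ := by
  have h1 : γ ^ n / δ ^ m = γ ^ (n : ℤ) * δ ^ (-(m : ℤ)) := by
    rw [zpow_neg, zpow_natCast, zpow_natCast, div_eq_mul_inv]
  rw [h1, nu_mul (zpow_ne_zero _ hγ0) (zpow_ne_zero _ hδ0), nu_zpow hγ0, nu_zpow hδ0]
  ring

theorem bounded_exponents_of_bounded_height (γ δ : RatFunc ℂ)
    (hγ : ∀ c : ℂ, γ ≠ RatFunc.C c) (hδ : ∀ c : ℂ, δ ≠ RatFunc.C c)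
    (hindep : ∀ r s : ℤ, (∃ c : ℂ, γ ^ r * δ ^ s = RatFunc.C c) → r = 0 ∧ s = 0)
    (L : ℤ) (hL : 0 ≤ L) :
    ∃ C : ℕ, ∀ n m : ℕ, H (γ ^ n / δ ^ m) ≤ L → max n m ≤ C := by
  have hγ0 : γ ≠ 0 := fun h => hγ 0 (by rw [h, map_zero])
  have hδ0 : δ ≠ 0 := fun h => hδ 0 (by rw [h, map_zero])
  -- some place where γ has nonzero valuation
  have hex : ∃ v0 : Option ℂ, nu v0 γ ≠ 0 := by
    by_contra h
    push_neg at h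
    obtain ⟨c, hc⟩ := eq_C_of_nu_eq_zero hγ0 h
    exact hγ c hc
  -- a nonvanishing 2×2 minor
  have hminor : ∃ v w : Option ℂ, nu v γ * nu w δ - nu w γ * nu v δ ≠ 0 := by
    by_contra h
    push_neg at h
    obtain ⟨v0, hv0⟩ := hex
    set r : ℤ := -(nu v0 δ) with hr
    set s : ℤ := nu v0 γ with hs
    have hf0 : γ ^ r * δ ^ s ≠ 0 := mul_ne_zero (zpow_ne_zero _ hγ0) (zpow_ne_zero _ hδ0)
    have hnuf : ∀ w, nu w (γ ^ r * δ ^ s) = 0 := by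
      intro w
      rw [nu_mul (zpow_ne_zero _ hγ0) (zpow_ne_zero _ hδ0), nu_zpow hγ0, nu_zpow hδ0]
      have hw := h v0 w
      rw [hr, hs]
      linarith
    obtain ⟨c, hc⟩ := eq_C_of_nu_eq_zero hf0 hnuf
    exact hv0 ((hindep r s ⟨c, hc⟩).2)
  obtain ⟨v, w, hD⟩ := hminor
  set av := nu v γ with hav
  set aw := nu w γ with haw
  set bv := nu v δ with hbv
  set bw := nu w δ with hbw
  set D := av * bw - aw * bv with hDdef
  set B := L * (|av| + |aw| + |bv| + |bw|) with hB
  refine ⟨B.toNat, ?_⟩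
  intro n m hH
  have hg0 : γ ^ n / δ ^ m ≠ 0 := div_ne_zero (pow_ne_zero _ hγ0) (pow_ne_zero _ hδ0)
  have he1 : nu v (γ ^ n / δ ^ m) = n * av - m * bv := nu_ratio hγ0 hδ0 n m v
  have he2 : nu w (γ ^ n / δ ^ m) = n * aw - m * bw := nu_ratio hγ0 hδ0 n m w
  set e1 := nu v (γ ^ n / δ ^ m) with hE1
  set e2 := nu w (γ ^ n / δ ^ m) with hE2
  have habs1 : |e1| ≤ L := le_trans (abs_nu_le hg0 v) hH
  have habs2 : |e2| ≤ L := le_trans (abs_nu_le hg0 w) hH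
  have hD1 : 1 ≤ |D| := Int.one_le_abs hD
  -- bound on n
  have hnD : (n : ℤ) * D = e1 * bw - e2 * bv := by rw [he1, he2]; ring
  have hmD : (m : ℤ) * D = e1 * aw - e2 * av := by rw [he1, he2]; ring
  have key : ∀ (k : ℤ) (x y : ℤ), k * D = e1 * x - e2 * y → k ≤ L * (|x| + |y|) := by
    intro k x y hk
    have h1 : |k| * |D| = |e1 * x - e2 * y| := by rw [← abs_mul, hk]
    have h2 : |e1 * x - e2 * y| ≤ |e1| * |x| + |e2| * |y| := by
      calc |e1 * x - e2 * y| ≤ |e1 * x| + |e2 * y| := abs_sub _ _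
        _ = |e1| * |x| + |e2| * |y| := by rw [abs_mul, abs_mul]
    have h3 : |e1| * |x| + |e2| * |y| ≤ L * |x| + L * |y| :=
      add_le_add (mul_le_mul_of_nonneg_right habs1 (abs_nonneg _))
        (mul_le_mul_of_nonneg_right habs2 (abs_nonneg _))
    have h4 : |k| * 1 ≤ |k| * |D| := mul_le_mul_of_nonneg_left hD1 (abs_nonneg _)
    have h5 : k ≤ |k| := le_abs_self k
    have := h1 ▸ h4
    linarith
  have hn : (n : ℤ) ≤ B := by
    have h6 := key (n : ℤ) bw bv hnD
    have h7 : 0 ≤ L * (|av| + |aw|) := mul_nonneg hL (by positivity)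
    have h8 : B = L * (|bw| + |bv|) + L * (|av| + |aw|) := by rw [hB]; ring
    linarith
  have hm : (m : ℤ) ≤ B := by
    have h6 := key (m : ℤ) aw av hmD
    have h7 : 0 ≤ L * (|bv| + |bw|) := mul_nonneg hL (by positivity)
    have h8 : B = L * (|aw| + |av|) + L * (|bv| + |bw|) := by rw [hB]; ring
    linarith
  have htn : ((B.toNat : ℤ)) = max B 0 := Int.toNat_eq_max B
  rw [max_le_iff]
  constructor <;> omega
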